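/- arXiv:math/0104020 — 4 statements merged into one kernel-verified Lean document; each statement's English description precedes it below -/
import Mathlib

section
/- Let X and S be symmetric positive definite n×n real matrices, and define W = S^{-1/2}(S^{1/2} X S^{1/2})^{1/2} S^{-1/2}. Then W is symmetric positive definite, W⁻¹ X W⁻¹ = S, and W is the unique symmetric positive definite matrix with this property. -/
/-!
With `R = S^{1/2}`, the equation `W⁻¹ X W⁻¹ = S = R R` is equivalent to `(R W R)² = R X R`.
So `W` solves it with `W` positive definite exactly when `R W R` is a positive semidefinite
square root of `R X R`, and there is exactly one, `(R X R)^{1/2}`. Uniqueness of the square root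
comes from the continuous functional calculus, after identifying the spectral formula `msqrt`
with `CFC.sqrt`.
-/

open Matrix
open scoped Classical

/-- The unique symmetric positive semidefinite square root of a positive semidefinite
real matrix (junk value `0` for matrices that are not positive semidefinite). -/
noncomputable def msqrt {n : ℕ} (A : Matrix (Fin n) (Fin n) ℝ) :
    Matrix (Fin n) (Fin n) ℝ :=
  if h : A.PosSemidef then
    (h.1.eigenvectorUnitary : Matrix (Fin n) (Fin n) ℝ) *
      diagonal ((↑) ∘ Real.sqrt ∘ h.1.eigenvalues) *
      (star (h.1.eigenvectorUnitary : Matrix (Fin n) (Fin n) ℝ))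
  else 0

open scoped MatrixOrder

section

variable {m α : Type*} [Fintype m] [DecidableEq m]

theorem Matrix.PosDef.mul_mul_of_isHermitian [Ring α] [PartialOrder α] [StarRing α]
    {A B : Matrix m m α} (hA : A.PosDef) (hB : B.IsHermitian) (hBu : IsUnit B) :
    (B * A * B).PosDef := by
  simpa only [hB.eq] using hA.conjTranspose_mul_mul_same (mulVec_injective_of_isUnit hBu)

theorem Matrix.inv_mul_mul_inv_eq_mul_self_iff [CommRing α] {P W X : Matrix m m α}
    (hP : IsUnit P) (hW : IsUnit W) :
    W⁻¹ * X * W⁻¹ = P * P ↔ P * W * P * (P * W * P) = P * X * P := by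
  lift P to (Matrix m m α)ˣ using hP
  lift W to (Matrix m m α)ˣ using hW
  rw [← coe_units_inv, Units.mul_inv_eq_iff_eq_mul, Units.inv_mul_eq_iff_eq_mul, eq_comm,
    ← Units.mul_left_inj P, ← Units.mul_right_inj P]
  simp only [mul_assoc]

end

variable {n : ℕ} {A T : Matrix (Fin n) (Fin n) ℝ}

theorem msqrt_eq_cfcSqrt (hA : A.PosSemidef) : msqrt A = CFC.sqrt A := by
  rw [CFC.sqrt_eq_cfc, cfc_nnreal_eq_real _ A hA.nonneg, hA.1.cfc_eq, msqrt, dif_pos hA]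
  simp only [IsHermitian.cfc, Unitary.conjStarAlgAut_apply]
  congr 3
  ext i
  simp [hA.eigenvalues_nonneg i]

theorem msqrt_mul_msqrt_self (hA : A.PosSemidef) : msqrt A * msqrt A = A := by
  rw [msqrt_eq_cfcSqrt hA]
  exact CFC.sqrt_mul_sqrt_self A hA.nonneg

theorem posDef_msqrt (hA : A.PosDef) : (msqrt A).PosDef := by
  rw [msqrt_eq_cfcSqrt hA.posSemidef]
  exact (IsStrictlyPositive.sqrt A hA.isStrictlyPositive).posDef

theorem msqrt_unique (hT : T.PosSemidef) (h : T * T = A) : msqrt A = T := by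
  have hA : A.PosSemidef := by
    rw [← h]
    simpa only [hT.1.eq] using posSemidef_conjTranspose_mul_self T
  rw [msqrt_eq_cfcSqrt hA]
  exact CFC.sqrt_unique h hT.nonneg

/-- For symmetric positive definite `X` and `S`, the matrix
`W = S^{-1/2} (S^{1/2} X S^{1/2})^{1/2} S^{-1/2}` is symmetric positive definite,
satisfies `W⁻¹ X W⁻¹ = S`, and is the unique symmetric positive definite matrix with
this property (i.e. it is the Nesterov–Todd scaling point of `X` and `S`). -/
theorem statement1 (n : ℕ) (X S : Matrix (Fin n) (Fin n) ℝ)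
    (hX : X.PosDef) (hS : S.PosDef)
    (W : Matrix (Fin n) (Fin n) ℝ)
    (hW : W = (msqrt S)⁻¹ * msqrt (msqrt S * X * msqrt S) * (msqrt S)⁻¹) :
    (W.IsSymm ∧ W.PosDef) ∧ W⁻¹ * X * W⁻¹ = S ∧
      ∀ W' : Matrix (Fin n) (Fin n) ℝ, W'.IsSymm → W'.PosDef →
        W'⁻¹ * X * W'⁻¹ = S → W' = W := by
  set R := msqrt S
  have hR : R.PosDef := posDef_msqrt hS
  have hRR : R * R = S := msqrt_mul_msqrt_self hS.posSemidef
  have hRXR : (R * X * R).PosDef := hX.mul_mul_of_isHermitian hR.1 hR.isUnit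
  set Q := msqrt (R * X * R)
  have hQ : Q.PosDef := posDef_msqrt hRXR
  have hRWR : R * W * R = Q := by
    have hdet : IsUnit R.det := (isUnit_iff_isUnit_det R).mp hR.isUnit
    rw [hW, mul_assoc, nonsing_inv_mul_cancel_right R _ hdet, mul_nonsing_inv_cancel_left R _ hdet]
  have hWpd : W.PosDef := hW ▸ hQ.mul_mul_of_isHermitian hR.inv.1 hR.inv.isUnit
  refine ⟨⟨(conjTranspose_eq_transpose_of_trivial W).symm.trans hWpd.1, hWpd⟩, ?_,
    fun W' _ hW' hNT ↦ ?_⟩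
  · rw [← hRR, inv_mul_mul_inv_eq_mul_self_iff hR.isUnit hWpd.isUnit, hRWR]
    exact msqrt_mul_msqrt_self hRXR.posSemidef
  · rw [← hRR, inv_mul_mul_inv_eq_mul_self_iff hR.isUnit hW'.isUnit] at hNT
    have hRW'R : R * W' * R = Q :=
      (msqrt_unique (hW'.mul_mul_of_isHermitian hR.1 hR.isUnit).posSemidef hNT).symm
    rw [← hRWR, mul_assoc, mul_assoc] at hRW'R
    exact hR.isUnit.mul_right_cancel (hR.isUnit.mul_left_cancel hRW'R)
end

section
/- (Todd's lemma) An n×n real matrix N can be written as a product N = XS with X and S symmetric positive definite n×n real matrices if and only if N is diagonalizable over the reals with all eigenvalues strictly positive; that is, if and only if there exist an invertible real matrix P and a diagonal real matrix D with strictly positive diagonal entries such that N = P D P⁻¹. -/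
/-!
With `R = √X` positive definite, `X * S = R * (R * S * R) * R⁻¹` is similar to
`R * S * R = Rᴴ * S * R`, which is positive definite and so is diagonalized by the spectral theorem
with positive eigenvalues. Conversely `P * M * P⁻¹ = (P * Pᴴ) * ((P⁻¹)ᴴ * M * P⁻¹)`, a product of two
positive definite matrices whenever `M` is positive definite, in particular when `M` is
diagonal with positive diagonal.
-/

open Matrix

open scoped MatrixOrder ComplexOrder

namespace Matrix

variable {𝕜 n : Type*} [RCLike 𝕜] [Fintype n] [DecidableEq n]

theorem PosDef.exists_isUnit_eq_mul_diagonal_mul_inv {M : Matrix n n 𝕜} (hM : M.PosDef) :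
    ∃ (U : Matrix n n 𝕜) (d : n → 𝕜), IsUnit U ∧ (∀ i, 0 < d i) ∧ M = U * diagonal d * U⁻¹ := by
  refine ⟨hM.1.eigenvectorUnitary, RCLike.ofReal ∘ hM.1.eigenvalues, Unitary.isUnit_coe,
    fun i => by simpa using hM.eigenvalues_pos i, ?_⟩
  rw [inv_eq_left_inv (Unitary.coe_star_mul_self hM.1.eigenvectorUnitary)]
  exact hM.1.spectral_theorem

theorem exists_posDef_mul_posDef_iff_exists_conj_posDef {N : Matrix n n 𝕜} :
    (∃ X S : Matrix n n 𝕜, X.PosDef ∧ S.PosDef ∧ N = X * S) ↔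
      ∃ P M : Matrix n n 𝕜, IsUnit P ∧ M.PosDef ∧ N = P * M * P⁻¹ := by
  constructor
  · rintro ⟨X, S, hX, hS, rfl⟩
    obtain ⟨R, hR, rfl⟩ : ∃ R : Matrix n n 𝕜, R.PosDef ∧ R * R = X :=
      ⟨CFC.sqrt X, hX.isStrictlyPositive.sqrt.posDef, CFC.sqrt_mul_sqrt_self X⟩
    refine ⟨R, R * S * R, hR.isUnit, ?_, ?_⟩
    · simpa [star_eq_conjTranspose, hR.1.eq] using
        hR.isUnit.posDef_star_left_conjugate_iff.mpr hS
    · simp [mul_assoc, mul_nonsing_inv _ ((isUnit_iff_isUnit_det R).mp hR.isUnit)]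
  · rintro ⟨P, M, hP, hM, rfl⟩
    refine ⟨P * Pᴴ, (P⁻¹)ᴴ * M * P⁻¹, ?_, ?_, ?_⟩
    · simpa [star_eq_conjTranspose] using hP.posDef_star_right_conjugate_iff.mpr PosDef.one
    · exact (isUnit_nonsing_inv_iff.mpr hP).posDef_star_left_conjugate_iff.mpr hM
    · have hPdet : IsUnit Pᴴ.det := by simpa using (isUnit_iff_isUnit_det P).mp hP
      simp [conjTranspose_nonsing_inv, mul_assoc, mul_nonsing_inv_cancel_left _ _ hPdet]

theorem exists_conj_posDef_iff_exists_conj_diagonal {N : Matrix n n 𝕜} :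
    (∃ P M : Matrix n n 𝕜, IsUnit P ∧ M.PosDef ∧ N = P * M * P⁻¹) ↔
      ∃ P D : Matrix n n 𝕜, IsUnit P ∧ D.IsDiag ∧ (∀ i, 0 < D i i) ∧ N = P * D * P⁻¹ := by
  constructor
  · rintro ⟨P, M, hP, hM, rfl⟩
    obtain ⟨U, d, hU, hd, rfl⟩ := hM.exists_isUnit_eq_mul_diagonal_mul_inv
    refine ⟨P * U, diagonal d, hP.mul hU, isDiag_diagonal d, by simpa using hd, ?_⟩
    simp [mul_inv_rev, mul_assoc]
  · rintro ⟨P, D, hP, hD, hDpos, rfl⟩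
    refine ⟨P, D, hP, ?_, rfl⟩
    rw [← hD.diagonal_diag]
    exact posDef_diagonal_iff.mpr hDpos

end Matrix

/-- **Todd's lemma.**  An `n × n` real matrix `N` is a product `N = X * S` of two
symmetric positive definite matrices if and only if it is diagonalizable over `ℝ`
with all eigenvalues strictly positive, i.e. `N = P * D * P⁻¹` for some invertible
real matrix `P` and some diagonal matrix `D` with strictly positive diagonal. -/
theorem statement2 (n : ℕ) (N : Matrix (Fin n) (Fin n) ℝ) :
    (∃ X S : Matrix (Fin n) (Fin n) ℝ, X.PosDef ∧ S.PosDef ∧ N = X * S) ↔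
    (∃ P D : Matrix (Fin n) (Fin n) ℝ, IsUnit P ∧ D.IsDiag ∧
      (∀ i : Fin n, 0 < D i i) ∧ N = P * D * P⁻¹) :=
  exists_posDef_mul_posDef_iff_exists_conj_posDef.trans exists_conj_posDef_iff_exists_conj_diagonal
end

section
/- For n ≥ 2, the real linear span of the set {Δᵀ − Δ : Δ is a product of two symmetric positive definite n×n real matrices} equals the space of all skew-symmetric n×n real matrices. In particular, for all indices i ≠ j there exists a product Δ of two symmetric positive definite matrices with Δᵀ − Δ = e_i e_jᵀ − e_j e_iᵀ, where e_1,…,e_n is the standard basis of ℝⁿ. -/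
/-!
For `i ≠ j` take `X = diag(d)` with `d = 1 + e_j` and `S = 1 + v vᵀ` with `v = e_i + e_j`.
Both are positive definite, and since `S` is symmetric,
`((X S)ᵀ - X S)_{ab} = (d_b - d_a) S_{ab}`, which is `e_i e_jᵀ - e_j e_iᵀ`. These matrices span
the skew-symmetric matrices, and every `Δᵀ - Δ` is skew-symmetric.
-/

open Matrix

/-- The space `so(n)` of skew-symmetric `n × n` real matrices, as a submodule of the
matrix space. -/
def skewSubmodule (n : ℕ) : Submodule ℝ (Matrix (Fin n) (Fin n) ℝ) where
  carrier := {M | Mᵀ = -M}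
  add_mem' := by
    intro a b ha hb
    simp only [Set.mem_setOf_eq] at *
    rw [Matrix.transpose_add, ha, hb, neg_add]
  zero_mem' := by simp
  smul_mem' := by
    intro c a ha
    simp only [Set.mem_setOf_eq] at *
    rw [Matrix.transpose_smul, ha, smul_neg]

section

variable {ι : Type*} [Fintype ι] [DecidableEq ι]

theorem Matrix.IsSymm.transpose_diagonal_mul_sub_apply {R : Type*} [CommRing R]
    {S : Matrix ι ι R} (hS : S.IsSymm) (d : ι → R) (a b : ι) :
    ((diagonal d * S)ᵀ - diagonal d * S) a b = (d b - d a) * S a b := by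
  rw [transpose_mul, hS.eq, diagonal_transpose, sub_apply, mul_diagonal, diagonal_mul]
  ring

theorem exists_posDef_transpose_mul_sub_mul_eq_single_sub_single {i j : ι} (hij : i ≠ j) :
    ∃ X S : Matrix ι ι ℝ, X.PosDef ∧ S.PosDef ∧
      (X * S)ᵀ - X * S = single i j 1 - single j i 1 := by
  set v : ι → ℝ := Pi.single i 1 + Pi.single j 1
  set d : ι → ℝ := 1 + Pi.single j 1
  have hd : ∀ k, 0 < d k := fun k => by
    simp only [d, Pi.add_apply, Pi.one_apply, Pi.single_apply]
    split_ifs <;> norm_num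
  have hS : (1 + vecMulVec v v).PosDef := by
    simpa using PosDef.one.add_posSemidef (posSemidef_vecMulVec_self_star v)
  refine ⟨diagonal d, 1 + vecMulVec v v, PosDef.diagonal hd, hS, ?_⟩
  ext a b
  rw [(isHermitian_iff_isSymm.1 hS.isHermitian).transpose_diagonal_mul_sub_apply]
  simp only [d, v, Matrix.add_apply, one_apply, vecMulVec_apply, Pi.add_apply, Pi.one_apply,
    Pi.single_apply, Matrix.sub_apply, single_apply]
  by_cases ha : a = i <;> by_cases hb : b = i <;> by_cases ha' : a = j <;> by_cases hb' : b = j <;>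
    simp_all [eq_comm]

theorem Matrix.eq_sum_smul_single_sub_single_of_transpose_eq_neg {M : Matrix ι ι ℝ}
    (hM : Mᵀ = -M) : M = ∑ i, ∑ j, (M i j / 2) • (single i j 1 - single j i 1) := by
  ext a b
  have hba : M b a = -M a b := by simpa using congrFun (congrFun hM a) b
  simp only [Matrix.sum_apply, Matrix.smul_apply, Matrix.sub_apply, single_apply, smul_eq_mul,
    mul_sub, Finset.sum_sub_distrib, ite_and, mul_ite, mul_one, mul_zero]
  simp only [Finset.sum_ite_irrel, Finset.sum_ite_eq', Finset.mem_univ, ↓reduceIte,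
    Finset.sum_const_zero, hba]
  ring

end

theorem transpose_sub_self_mem_skewSubmodule {n : ℕ} (A : Matrix (Fin n) (Fin n) ℝ) :
    Aᵀ - A ∈ skewSubmodule n := by
  change (Aᵀ - A)ᵀ = -(Aᵀ - A)
  rw [transpose_sub, transpose_transpose, neg_sub]

theorem skewSubmodule_le_of_single_sub_single_mem {n : ℕ}
    {P : Submodule ℝ (Matrix (Fin n) (Fin n) ℝ)}
    (hP : ∀ i j, i ≠ j → single i j 1 - single j i 1 ∈ P) : skewSubmodule n ≤ P := by
  intro M hM
  rw [eq_sum_smul_single_sub_single_of_transpose_eq_neg hM]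
  refine P.sum_mem fun i _ => P.sum_mem fun j _ => P.smul_mem _ ?_
  obtain rfl | hij := eq_or_ne i j
  · simp
  · exact hP i j hij

theorem statement7_general (n : ℕ) :
    Submodule.span ℝ {M : Matrix (Fin n) (Fin n) ℝ |
        ∃ X S : Matrix (Fin n) (Fin n) ℝ, X.PosDef ∧ S.PosDef ∧ M = (X * S)ᵀ - X * S} =
      skewSubmodule n ∧
    ∀ i j : Fin n, i ≠ j →
      ∃ X S : Matrix (Fin n) (Fin n) ℝ, X.PosDef ∧ S.PosDef ∧
        (X * S)ᵀ - X * S =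
          Matrix.single i j (1 : ℝ) - Matrix.single j i (1 : ℝ) := by
  refine ⟨le_antisymm ?_ ?_, fun i j hij =>
    exists_posDef_transpose_mul_sub_mul_eq_single_sub_single hij⟩
  · rw [Submodule.span_le]
    rintro _ ⟨X, S, -, -, rfl⟩
    exact transpose_sub_self_mem_skewSubmodule (X * S)
  · refine skewSubmodule_le_of_single_sub_single_mem fun i j hij => Submodule.subset_span ?_
    obtain ⟨X, S, hX, hS, h⟩ := exists_posDef_transpose_mul_sub_mul_eq_single_sub_single hij
    exact ⟨X, S, hX, hS, h.symm⟩

/-- For `n ≥ 2`, the real linear span of the matrices `Δᵀ - Δ`, where `Δ` ranges over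
products of two symmetric positive definite matrices, is the whole space of
skew-symmetric matrices.  In particular, for all `i ≠ j` there is such a `Δ` with
`Δᵀ - Δ = e_i e_jᵀ - e_j e_iᵀ`. -/
theorem statement7 (n : ℕ) (hn : 2 ≤ n) :
    Submodule.span ℝ {M : Matrix (Fin n) (Fin n) ℝ |
        ∃ X S : Matrix (Fin n) (Fin n) ℝ, X.PosDef ∧ S.PosDef ∧ M = (X * S)ᵀ - X * S} =
      skewSubmodule n ∧
    ∀ i j : Fin n, i ≠ j →
      ∃ X S : Matrix (Fin n) (Fin n) ℝ, X.PosDef ∧ S.PosDef ∧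
        (X * S)ᵀ - X * S =
          Matrix.single i j (1 : ℝ) - Matrix.single j i (1 : ℝ) :=
  statement7_general n
end

section
/- Let H be a real-valued function, twice continuously differentiable on the open cone Sym⁺(n) of symmetric positive definite n×n real matrices, such that: (i) for every X ∈ Sym⁺(n) there exists Υ(X) ∈ Sym⁺(n) such that the Hessian of H at X acts on symmetric matrices as H''(X)A = Υ(X)⁻¹ A Υ(X)⁻¹; and (ii) for all X, S ∈ Sym⁺(n) there exists W ∈ Sym⁺(n) with H''(W)X = S and H''(X) = H''(W) ∘ H''(S) ∘ H''(W) as linear maps on symmetric matrices. Then there exists a constant λ > 0 such that H''(X)A = λ X⁻¹ A X⁻¹ for all X ∈ Sym⁺(n) and all symmetric A; that is, H''(X) = λ F''(X) where F(X) = -ln det(X). -/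
open Matrix

namespace Statement8Aux


variable {n : ℕ}

lemma isSymm_of_posDef {A : Matrix (Fin n) (Fin n) ℝ} (h : A.PosDef) : A.IsSymm := by
  have := h.isHermitian
  rwa [Matrix.IsHermitian, Matrix.conjTranspose_eq_transpose_of_trivial] at this

lemma isSymm_conj {A B : Matrix (Fin n) (Fin n) ℝ} (hA : A.IsSymm) (hB : B.IsSymm) :
    (B * A * B).IsSymm := by
  rw [Matrix.IsSymm, Matrix.transpose_mul, Matrix.transpose_mul, hA.eq, hB.eq, Matrix.mul_assoc]

lemma isSymm_inv {A : Matrix (Fin n) (Fin n) ℝ} (hA : A.IsSymm) : (A⁻¹).IsSymm := by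
  rw [Matrix.IsSymm, Matrix.transpose_nonsing_inv, hA.eq]

lemma posDef_conj {A B : Matrix (Fin n) (Fin n) ℝ} (hA : A.PosDef) (hB : IsUnit B.det) :
    (B * A * Bᵀ).PosDef := by
  refine Matrix.PosDef.of_dotProduct_mulVec_pos ?_ ?_
  · rw [Matrix.IsHermitian, Matrix.conjTranspose_eq_transpose_of_trivial,
      Matrix.transpose_mul, Matrix.transpose_mul, Matrix.transpose_transpose,
      (isSymm_of_posDef hA).eq, Matrix.mul_assoc]
  · intro x hx
    have hy : x ᵥ* B ≠ 0 := by
      intro h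
      exact hx <| (Matrix.vecMul_injective_iff_isUnit.mpr ((Matrix.isUnit_iff_isUnit_det B).mpr hB)) (h.trans (Matrix.zero_vecMul B).symm)
    have := hA.dotProduct_mulVec_pos hy
    simpa [← Matrix.mulVec_mulVec, Matrix.dotProduct_mulVec, Matrix.mulVec_transpose] using this

lemma sq_cancel {A B : Matrix (Fin n) (Fin n) ℝ} (hA : A.PosDef) (hB : B.PosDef)
    (h : A * A = B * B) : A = B :=
  by open scoped MatrixOrder in exact (CFC.sq_eq_sq_iff A B hA.posSemidef.nonneg hB.posSemidef.nonneg).mp (by rw [pow_two, pow_two, h])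



variable {n : ℕ}

def emb (i j : Fin n) (A : Matrix (Fin 2) (Fin 2) ℝ) : Matrix (Fin n) (Fin n) ℝ :=
  Matrix.of fun a b =>
    if a = i then (if b = i then A 0 0 else if b = j then A 0 1 else 0)
    else if a = j then (if b = i then A 1 0 else if b = j then A 1 1 else 0)
    else if b = a then 1 else 0

lemma sum_two_support {i j : Fin n} (hij : i ≠ j) (x y : ℝ) (f : Fin n → ℝ) :
    (∑ k, (if k = i then x else if k = j then y else 0) * f k) = x * f i + y * f j := by
  have h : ∀ k : Fin n, (if k = i then x else if k = j then y else 0) * f k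
      = (if k = i then x * f i else 0) + (if k = j then y * f j else 0) := by
    intro k
    by_cases h1 : k = i
    · simp [h1, Ne.symm hij, hij]
    · by_cases h2 : k = j
      · simp [h1, h2, Ne.symm hij]
      · simp [h1, h2]
  rw [Finset.sum_congr rfl fun k _ => h k, Finset.sum_add_distrib]
  simp

lemma sum_two_support' {i j : Fin n} (hij : i ≠ j) (x y : ℝ) (f : Fin n → ℝ) :
    (∑ k, f k * (if k = i then x else if k = j then y else 0)) = f i * x + f j * y := by
  simp_rw [mul_comm (f _)]
  rw [sum_two_support hij x y f, mul_comm x, mul_comm y]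

lemma emb_row_i {i j : Fin n} (A : Matrix (Fin 2) (Fin 2) ℝ) (k : Fin n) :
    emb i j A i k = if k = i then A 0 0 else if k = j then A 0 1 else 0 := by
  simp [emb]

lemma emb_row_j {i j : Fin n} (hij : i ≠ j) (A : Matrix (Fin 2) (Fin 2) ℝ) (k : Fin n) :
    emb i j A j k = if k = i then A 1 0 else if k = j then A 1 1 else 0 := by
  simp [emb, Ne.symm hij]

lemma emb_row_o {i j : Fin n} {a : Fin n} (ha : a ≠ i) (ha' : a ≠ j)
    (A : Matrix (Fin 2) (Fin 2) ℝ) (k : Fin n) :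
    emb i j A a k = if k = a then 1 else 0 := by
  simp [emb, ha, ha']

lemma mul_emb_row_i {i j : Fin n} (hij : i ≠ j) (A : Matrix (Fin 2) (Fin 2) ℝ)
    (B : Matrix (Fin n) (Fin n) ℝ) (b : Fin n) :
    (emb i j A * B) i b = A 0 0 * B i b + A 0 1 * B j b := by
  rw [Matrix.mul_apply]
  simp_rw [emb_row_i]
  exact sum_two_support hij _ _ _

lemma mul_emb_row_j {i j : Fin n} (hij : i ≠ j) (A : Matrix (Fin 2) (Fin 2) ℝ)
    (B : Matrix (Fin n) (Fin n) ℝ) (b : Fin n) :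
    (emb i j A * B) j b = A 1 0 * B i b + A 1 1 * B j b := by
  rw [Matrix.mul_apply]
  simp_rw [emb_row_j hij]
  exact sum_two_support hij _ _ _

lemma mul_emb_row_o {i j : Fin n} {a : Fin n} (ha : a ≠ i) (ha' : a ≠ j)
    (A : Matrix (Fin 2) (Fin 2) ℝ) (B : Matrix (Fin n) (Fin n) ℝ) (b : Fin n) :
    (emb i j A * B) a b = B a b := by
  rw [Matrix.mul_apply]
  simp_rw [emb_row_o ha ha']
  simp

lemma emb_col_i {i j : Fin n} (hij : i ≠ j) (A : Matrix (Fin 2) (Fin 2) ℝ) (k : Fin n) :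
    emb i j A k i = if k = i then A 0 0 else if k = j then A 1 0 else 0 := by
  by_cases h1 : k = i
  · simp [emb, h1, hij, Ne.symm hij]
  · by_cases h2 : k = j
    · simp [emb, h1, h2, Ne.symm hij]
    · simp [emb, h1, h2, Ne.symm h1]

lemma emb_col_j {i j : Fin n} (hij : i ≠ j) (A : Matrix (Fin 2) (Fin 2) ℝ) (k : Fin n) :
    emb i j A k j = if k = i then A 0 1 else if k = j then A 1 1 else 0 := by
  by_cases h1 : k = i
  · simp [emb, h1, hij, Ne.symm hij]
  · by_cases h2 : k = j
    · simp [emb, h1, h2, Ne.symm hij]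
    · simp [emb, h1, h2, Ne.symm h2]

lemma emb_mul_col_i {i j : Fin n} (hij : i ≠ j) (A : Matrix (Fin 2) (Fin 2) ℝ)
    (B : Matrix (Fin n) (Fin n) ℝ) (a : Fin n) :
    (B * emb i j A) a i = B a i * A 0 0 + B a j * A 1 0 := by
  rw [Matrix.mul_apply]
  simp_rw [emb_col_i hij]
  exact sum_two_support' hij _ _ _

lemma emb_mul_col_j {i j : Fin n} (hij : i ≠ j) (A : Matrix (Fin 2) (Fin 2) ℝ)
    (B : Matrix (Fin n) (Fin n) ℝ) (a : Fin n) :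
    (B * emb i j A) a j = B a i * A 0 1 + B a j * A 1 1 := by
  rw [Matrix.mul_apply]
  simp_rw [emb_col_j hij]
  exact sum_two_support' hij _ _ _

lemma emb_mul {i j : Fin n} (hij : i ≠ j) (A B : Matrix (Fin 2) (Fin 2) ℝ) :
    emb i j A * emb i j B = emb i j (A * B) := by
  ext a b
  by_cases ha1 : a = i
  · rw [ha1, mul_emb_row_i hij]
    simp only [emb_row_i, emb_row_j hij]
    by_cases hb1 : b = i
    · simp [hb1, Ne.symm hij, Matrix.mul_apply, Fin.sum_univ_two]
    · by_cases hb2 : b = j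
      · simp [hb1, hb2, Ne.symm hij, Matrix.mul_apply, Fin.sum_univ_two]
      · simp [hb1, hb2]
  · by_cases ha2 : a = j
    · rw [ha2, mul_emb_row_j hij]
      simp only [emb_row_i, emb_row_j hij]
      by_cases hb1 : b = i
      · simp [hb1, Ne.symm hij, Matrix.mul_apply, Fin.sum_univ_two]
      · by_cases hb2 : b = j
        · simp [hb1, hb2, Ne.symm hij, Matrix.mul_apply, Fin.sum_univ_two]
        · simp [hb1, hb2]
    · rw [mul_emb_row_o ha1 ha2, emb_row_o ha1 ha2, emb_row_o ha1 ha2]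

lemma emb_transpose {i j : Fin n} (hij : i ≠ j) (A : Matrix (Fin 2) (Fin 2) ℝ) :
    (emb i j A)ᵀ = emb i j Aᵀ := by
  ext a b
  rw [Matrix.transpose_apply]
  by_cases ha1 : a = i
  · rw [ha1, emb_col_i hij, emb_row_i]
    by_cases hb1 : b = i
    · simp [hb1]
    · by_cases hb2 : b = j <;> simp [hb1, hb2]
  · by_cases ha2 : a = j
    · rw [ha2, emb_col_j hij, emb_row_j hij]
      by_cases hb1 : b = i
      · simp [hb1]
      · by_cases hb2 : b = j <;> simp [hb1, hb2]
    · by_cases hb1 : b = i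
      · rw [hb1, emb_row_i, emb_row_o ha1 ha2]
        simp [ha1, ha2, Ne.symm ha1]
      · by_cases hb2 : b = j
        · rw [hb2, emb_row_j hij, emb_row_o ha1 ha2]
          simp [ha1, ha2, Ne.symm ha2]
        · rw [emb_row_o hb1 hb2, emb_row_o ha1 ha2]
          by_cases h : a = b
          · simp [h]
          · simp [h, Ne.symm h, fun hh : b = a => h hh.symm]

lemma emb_one {i j : Fin n} (hij : i ≠ j) : emb i j (1 : Matrix (Fin 2) (Fin 2) ℝ) = 1 := by
  ext a b
  by_cases ha1 : a = i
  · rw [ha1, emb_row_i]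
    by_cases hb1 : b = i
    · simp [hb1, Matrix.one_apply]
    · by_cases hb2 : b = j
      · simp [hb1, hb2, Matrix.one_apply, hij, Ne.symm hij]
      · simp [hb1, hb2, Matrix.one_apply, Ne.symm hb1]
  · by_cases ha2 : a = j
    · rw [ha2, emb_row_j hij]
      by_cases hb1 : b = i
      · simp [hb1, Matrix.one_apply, Ne.symm hij]
      · by_cases hb2 : b = j
        · simp [hb1, hb2, Matrix.one_apply, hij, Ne.symm hij]
        · simp [hb1, hb2, Matrix.one_apply, Ne.symm hb2]
    · rw [emb_row_o ha1 ha2, Matrix.one_apply]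
      by_cases h : b = a
      · simp [h]
      · simp [h, Ne.symm h]



variable {n : ℕ}

lemma posDef_fin2 {A : Matrix (Fin 2) (Fin 2) ℝ} (h11 : 0 < A 0 0)
    (hsym : A 1 0 = A 0 1) (hdet : 0 < A 0 0 * A 1 1 - A 0 1 * A 1 0) : A.PosDef := by
  refine Matrix.PosDef.of_dotProduct_mulVec_pos ?_ ?_
  · rw [Matrix.IsHermitian, Matrix.conjTranspose_eq_transpose_of_trivial]
    ext a b
    fin_cases a <;> fin_cases b <;> simp [Matrix.transpose_apply, hsym]
  · intro x hx
    have hx' : x 0 ≠ 0 ∨ x 1 ≠ 0 := by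
      by_contra h
      push_neg at h
      exact hx (funext fun k => by fin_cases k <;> simp [h.1, h.2])
    have expand : star x ⬝ᵥ A *ᵥ x
        = A 0 0 * (x 0)^2 + (A 0 1 + A 1 0) * (x 0 * x 1) + A 1 1 * (x 1)^2 := by
      simp [dotProduct, Matrix.mulVec, Fin.sum_univ_two]
      ring
    rw [expand, hsym]
    by_cases h1 : x 1 = 0
    · have h0 : x 0 ≠ 0 := by
        rcases hx' with h | h
        · exact h
        · exact absurd h1 h
      rw [h1]
      have := mul_pos h11 (sq_pos_of_ne_zero h0)
      nlinarith
    · have hdet' : 0 < A 0 0 * A 1 1 - A 0 1 * A 0 1 := by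
        rw [hsym] at hdet; exact hdet
      nlinarith [sq_nonneg (A 0 0 * x 0 + A 0 1 * x 1),
        mul_pos hdet' (sq_pos_of_ne_zero h1), h11]

lemma emb_posDef {i j : Fin n} (hij : i ≠ j) {A : Matrix (Fin 2) (Fin 2) ℝ}
    (hA : A.PosDef) : (emb i j A).PosDef := by
  have hAs : A 1 0 = A 0 1 := Matrix.IsSymm.apply (isSymm_of_posDef hA) 0 1
  refine Matrix.PosDef.of_dotProduct_mulVec_pos ?_ ?_
  · rw [Matrix.IsHermitian, Matrix.conjTranspose_eq_transpose_of_trivial, emb_transpose hij,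
      (isSymm_of_posDef hA).eq]
  · intro x hx
    have hmv : ∀ a : Fin n, (emb i j A *ᵥ x) a =
        if a = i then A 0 0 * x i + A 0 1 * x j
        else if a = j then A 1 0 * x i + A 1 1 * x j
        else x a := by
      intro a
      by_cases ha1 : a = i
      · rw [ha1, Matrix.mulVec, if_pos rfl]
        show ∑ k, emb i j A i k * x k = _
        simp_rw [emb_row_i]
        exact sum_two_support hij _ _ _
      · by_cases ha2 : a = j
        · rw [ha2, Matrix.mulVec, if_neg (by rw [← ha2] at hij ⊢; exact fun h => ha1 (ha2 ▸ h)), if_pos rfl]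
          show ∑ k, emb i j A j k * x k = _
          simp_rw [emb_row_j hij]
          exact sum_two_support hij _ _ _
        · rw [Matrix.mulVec, if_neg ha1, if_neg ha2]
          show ∑ k, emb i j A a k * x k = _
          simp_rw [emb_row_o ha1 ha2]
          simp
    have hdp : star x ⬝ᵥ (emb i j A *ᵥ x)
        = (x i * (A 0 0 * x i + A 0 1 * x j) + x j * (A 1 0 * x i + A 1 1 * x j))
          + ∑ a ∈ (Finset.univ.erase i).erase j, x a * x a := by
      have hstar : star x = x := by simp
      rw [hstar, dotProduct]
      have hj : j ∈ Finset.univ.erase i := Finset.mem_erase.mpr ⟨hij.symm, Finset.mem_univ j⟩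
      rw [← Finset.add_sum_erase _ _ (Finset.mem_univ i), ← Finset.add_sum_erase _ _ hj]
      rw [hmv i, hmv j, if_pos rfl, if_neg hij.symm, if_pos rfl]
      have : ∀ a ∈ (Finset.univ.erase i).erase j, x a * (emb i j A *ᵥ x) a = x a * x a := by
        intro a ha
        have h1 := Finset.mem_erase.mp ha
        have h2 := Finset.mem_erase.mp h1.2
        rw [hmv a, if_neg h2.1, if_neg h1.1]
      rw [Finset.sum_congr rfl this]
      ring
    rw [hdp]
    by_cases hv : x i = 0 ∧ x j = 0
    · obtain ⟨k, hk⟩ := Function.ne_iff.mp hx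
      have hki : k ≠ i := fun h => hk (h ▸ hv.1)
      have hkj : k ≠ j := fun h => hk (h ▸ hv.2)
      have hmem : k ∈ (Finset.univ.erase i).erase j :=
        Finset.mem_erase.mpr ⟨hkj, Finset.mem_erase.mpr ⟨hki, Finset.mem_univ k⟩⟩
      have hsum : x k * x k ≤ ∑ a ∈ (Finset.univ.erase i).erase j, x a * x a :=
        Finset.single_le_sum (fun a _ => mul_self_nonneg (x a)) hmem
      have : 0 < x k * x k := mul_self_pos.mpr hk
      rw [hv.1, hv.2]
      simp only [mul_zero, zero_mul, add_zero, mul_zero, zero_add]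
      linarith
    · have hvne : ![x i, x j] ≠ 0 := by
        intro h
        apply hv
        constructor
        · have := congrFun h 0; simpa using this
        · have := congrFun h 1; simpa using this
      have := hA.dotProduct_mulVec_pos hvne
      have hq : star ![x i, x j] ⬝ᵥ A *ᵥ ![x i, x j]
          = x i * (A 0 0 * x i + A 0 1 * x j) + x j * (A 1 0 * x i + A 1 1 * x j) := by
        simp [dotProduct, Matrix.mulVec, Fin.sum_univ_two]
        try ring
      rw [hq] at this
      have hsum : 0 ≤ ∑ a ∈ (Finset.univ.erase i).erase j, x a * x a :=
        Finset.sum_nonneg fun a _ => mul_self_nonneg (x a)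
      linarith




def Q2 : Matrix (Fin 2) (Fin 2) ℝ := !![5, -8; -8, 80]
def R2 : Matrix (Fin 2) (Fin 2) ℝ := !![88, 34; 34, 37]
def M2 : Matrix (Fin 2) (Fin 2) ℝ := !![168, -126; 2016, 2688]
def N2 : Matrix (Fin 2) (Fin 2) ℝ := !![168, 2016; -126, 2688]
def E2 : Matrix (Fin 2) (Fin 2) ℝ := !![210, 0; 0, 3360]

lemma Q2pd : Q2.PosDef := posDef_fin2 (by norm_num [Q2]) (by norm_num [Q2]) (by norm_num [Q2])
lemma R2pd : R2.PosDef := posDef_fin2 (by norm_num [R2]) (by norm_num [R2]) (by norm_num [R2])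
lemma E2pd : E2.PosDef := posDef_fin2 (by norm_num [E2]) (by norm_num [E2]) (by norm_num [E2])

lemma mulQR : Q2 * R2 = M2 := by
  ext a b
  fin_cases a <;> fin_cases b <;>
    norm_num [Q2, R2, M2, Matrix.mul_apply, Fin.sum_univ_two]

lemma mulRQ : R2 * Q2 = N2 := by
  ext a b
  fin_cases a <;> fin_cases b <;>
    norm_num [Q2, R2, N2, Matrix.mul_apply, Fin.sum_univ_two]

lemma numEE : Q2 * (R2 * R2) * Q2 = E2 * E2 := by
  ext a b
  fin_cases a <;> fin_cases b <;>
    norm_num [Q2, R2, E2, Matrix.mul_apply, Fin.sum_univ_two]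


lemma conj_cancel {A B R : Matrix (Fin n) (Fin n) ℝ} (hR : IsUnit R.det)
    (h : R * A * R = R * B * R) : A = B := by
  have h' := congrArg (fun M => R⁻¹ * M * R⁻¹) h
  simpa only [Matrix.mul_assoc, Matrix.nonsing_inv_mul_cancel_left _ _ hR,
    ← Matrix.mul_assoc, Matrix.nonsing_inv_mul_cancel_right _ _ hR,
    Matrix.mul_nonsing_inv_cancel_right _ _ hR] using h'

end Statement8Aux

open Statement8Aux

/-- Let `H` be twice continuously differentiable on the cone `Sym⁺(n)` of symmetric
positive definite matrices, with Hessian (w.r.t. the trace inner product) `Hess X` at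
`X`, such that (i) every Hessian is of the form `A ↦ Υ(X)⁻¹ A Υ(X)⁻¹` with
`Υ(X) ∈ Sym⁺(n)`, and (ii) for all `X, S ∈ Sym⁺(n)` there is a scaling point
`W ∈ Sym⁺(n)` with `H''(W) X = S` and `H''(X) = H''(W) ∘ H''(S) ∘ H''(W)`.  Then
there is a constant `λ > 0` with `H''(X) A = λ X⁻¹ A X⁻¹` for all `X ∈ Sym⁺(n)` and
all symmetric `A`, i.e. `H'' = λ F''` for `F = -ln det`. -/
theorem statement8 (n : ℕ) (H : Matrix (Fin n) (Fin n) ℝ → ℝ)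
    (Hess : Matrix (Fin n) (Fin n) ℝ →
      Matrix (Fin n) (Fin n) ℝ →ₗ[ℝ] Matrix (Fin n) (Fin n) ℝ)
    -- `Hess X` is the Hessian of `H` at `X` (w.r.t. the trace inner product):
    -- the second directional derivative of `H` at `X` in a symmetric direction `A`
    -- is the quadratic form `⟨Hess X A, A⟩ = tr (Hess X A * A)`.
    (hHess : ∀ X, X.PosDef → ∀ A, A.IsSymm →
      HasDerivAt (deriv fun t : ℝ => H (X + t • A)) ((Hess X A * A).trace) 0)
    (hC2 : ∀ X, X.PosDef → ∀ A, A.IsSymm →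
      ∀ᶠ t : ℝ in nhds 0, DifferentiableAt ℝ (fun s : ℝ => H (X + s • A)) t)
    -- `Hess X` maps symmetric matrices to symmetric matrices and is self-adjoint
    -- with respect to the trace inner product.
    (hsymm : ∀ X, X.PosDef → ∀ A, A.IsSymm → (Hess X A).IsSymm)
    (hselfadj : ∀ X, X.PosDef → ∀ A B, A.IsSymm → B.IsSymm →
      (Hess X A * B).trace = (A * Hess X B).trace)
    -- (i): each Hessian is a congruence `A ↦ Υ(X)⁻¹ A Υ(X)⁻¹` by some `Υ(X) ∈ Sym⁺(n)`.
    (h1 : ∀ X, X.PosDef → ∃ U : Matrix (Fin n) (Fin n) ℝ, U.PosDef ∧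
      ∀ A, A.IsSymm → Hess X A = U⁻¹ * A * U⁻¹)
    -- (ii): the Nesterov–Todd scaling point identity.
    (h2 : ∀ X S, X.PosDef → S.PosDef → ∃ W : Matrix (Fin n) (Fin n) ℝ, W.PosDef ∧
      Hess W X = S ∧ ∀ A, A.IsSymm → Hess X A = Hess W (Hess S (Hess W A))) :
    ∃ lam : ℝ, 0 < lam ∧ ∀ X, X.PosDef → ∀ A, A.IsSymm →
      Hess X A = lam • (X⁻¹ * A * X⁻¹) := by
  classical
  choose U hUpos hUeq using h1
  have onePD : (1 : Matrix (Fin n) (Fin n) ℝ).PosDef := Matrix.PosDef.one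
  have hdetU : ∀ (X : Matrix (Fin n) (Fin n) ℝ), X.PosDef → IsUnit X.det :=
    fun X hX => isUnit_iff_ne_zero.mpr hX.det_pos.ne'
  set C : Matrix (Fin n) (Fin n) ℝ := U 1 onePD with hCdef
  have hCpos : C.PosDef := hUpos 1 onePD
  -- the key consequence of (i) + (ii)
  have key : ∀ X S (hX : X.PosDef) (hS : S.PosDef), ∃ W, ∃ hW : W.PosDef,
      X = U W hW * S * U W hW ∧ U X hX = U W hW * U S hS * U W hW := by
    intro X S hX hS
    obtain ⟨W, hW, hWX, hcomp⟩ := h2 X S hX hS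
    have hPpd := hUpos W hW
    have hTpd := hUpos S hS
    set P := U W hW with hPdef
    set T := U S hS with hTdef
    have hPsymm : P.IsSymm := isSymm_of_posDef hPpd
    have hPdet : IsUnit P.det := hdetU P hPpd
    refine ⟨W, hW, ?_, ?_⟩
    · have e : P⁻¹ * X * P⁻¹ = S := by
        rw [← hUeq W hW X (isSymm_of_posDef hX)]; exact hWX
      calc X = (P * P⁻¹) * X * (P⁻¹ * P) := by
            rw [Matrix.mul_nonsing_inv _ hPdet, Matrix.nonsing_inv_mul _ hPdet,
              Matrix.one_mul, Matrix.mul_one]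
        _ = P * (P⁻¹ * X * P⁻¹) * P := by simp only [Matrix.mul_assoc]
        _ = P * S * P := by rw [e]
    · have hT1 : ((P⁻¹ : Matrix (Fin n) (Fin n) ℝ) * 1 * P⁻¹).IsSymm :=
        isSymm_conj Matrix.isSymm_one (isSymm_inv hPsymm)
      have hT2 : ((T⁻¹ : Matrix (Fin n) (Fin n) ℝ) * (P⁻¹ * 1 * P⁻¹) * T⁻¹).IsSymm :=
        isSymm_conj hT1 (isSymm_inv (isSymm_of_posDef hTpd))
      have e := hcomp 1 Matrix.isSymm_one
      rw [hUeq X hX 1 Matrix.isSymm_one, hUeq W hW 1 Matrix.isSymm_one,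
        hUeq S hS _ hT1, hUeq W hW _ hT2] at e
      have hKpd : (P * T * P).PosDef := by
        have := posDef_conj hTpd hPdet
        rwa [hPsymm.eq] at this
      have hsq : (U X hX)⁻¹ * (U X hX)⁻¹ = (P * T * P)⁻¹ * (P * T * P)⁻¹ := by
        rw [Matrix.mul_inv_rev, Matrix.mul_inv_rev]
        simp only [Matrix.mul_one, Matrix.mul_assoc] at e ⊢
        exact e
      have hinv : (U X hX)⁻¹ = (P * T * P)⁻¹ :=
        sq_cancel (hUpos X hX).inv hKpd.inv hsq
      calc U X hX = ((U X hX)⁻¹)⁻¹ :=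
            (Matrix.nonsing_inv_nonsing_inv _ (hdetU _ (hUpos X hX))).symm
        _ = ((P * T * P)⁻¹)⁻¹ := by rw [hinv]
        _ = P * T * P := Matrix.nonsing_inv_nonsing_inv _ (hdetU _ hKpd)
  -- instance with S = 1 : U X = (√X) C (√X)
  have inst1 : ∀ X (hX : X.PosDef), ∃ G, G.PosDef ∧ G * G = X ∧ U X hX = G * C * G := by
    intro X hX
    obtain ⟨W, hW, hX1, hU1⟩ := key X 1 hX onePD
    refine ⟨U W hW, hUpos W hW, ?_, ?_⟩
    · rw [hX1, Matrix.mul_one]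
    · rw [hU1]
  -- the two-index relation forcing C to be scalar
  have pair : ∀ i j : Fin n, i ≠ j → C i j = 0 ∧ C i i = C j j := by
    intro i j hij
    set Q : Matrix (Fin n) (Fin n) ℝ := emb i j Q2 with hQdef
    set R : Matrix (Fin n) (Fin n) ℝ := emb i j R2 with hRdef
    set E : Matrix (Fin n) (Fin n) ℝ := emb i j E2 with hEdef
    have hQpd : Q.PosDef := emb_posDef hij Q2pd
    have hRpd : R.PosDef := emb_posDef hij R2pd
    have hEpd : E.PosDef := emb_posDef hij E2pd
    have hQsymm := isSymm_of_posDef hQpd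
    have hRsymm := isSymm_of_posDef hRpd
    have hSpd : (R * R).PosDef := by
      have := posDef_conj onePD (hdetU R hRpd)
      rwa [Matrix.mul_one, hRsymm.eq] at this
    have hXpd : (Q * (R * R) * Q).PosDef := by
      have := posDef_conj hSpd (hdetU Q hQpd)
      rwa [hQsymm.eq] at this
    obtain ⟨W, hW, e1, e2⟩ := key (Q * (R * R) * Q) (R * R) hXpd hSpd
    have hPpd := hUpos W hW
    set P := U W hW with hPdef
    have hPsymm := isSymm_of_posDef hPpd
    -- P = Q by Riccati uniqueness
    have hPQ : P = Q := by
      have hA : (R * P * R).PosDef := by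
        have := posDef_conj hPpd (hdetU R hRpd); rwa [hRsymm.eq] at this
      have hB : (R * Q * R).PosDef := by
        have := posDef_conj hQpd (hdetU R hRpd); rwa [hRsymm.eq] at this
      have hsq : (R * P * R) * (R * P * R) = (R * Q * R) * (R * Q * R) := by
        calc (R * P * R) * (R * P * R) = R * (P * (R * R) * P) * R := by
              simp only [Matrix.mul_assoc]
          _ = R * (Q * (R * R) * Q) * R := by rw [← e1]
          _ = (R * Q * R) * (R * Q * R) := by simp only [Matrix.mul_assoc]
      exact conj_cancel (hdetU R hRpd) (sq_cancel hA hB hsq)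
    -- U (R*R) = R C R
    obtain ⟨G, hGpd, hGG, hGU⟩ := inst1 (R * R) hSpd
    have hGR : G = R := sq_cancel hGpd hRpd hGG
    -- U (Q (R*R) Q) = E C E
    have hEE : E * E = Q * (R * R) * Q := by
      rw [hEdef, hQdef, hRdef, emb_mul hij, emb_mul hij, emb_mul hij, emb_mul hij, numEE]
    obtain ⟨G', hG'pd, hG'G, hG'U⟩ := inst1 (Q * (R * R) * Q) hXpd
    have hG'E : G' = E := sq_cancel hG'pd hEpd (hG'G.trans hEE.symm)
    -- the central identity
    have main : E * C * E = emb i j M2 * C * emb i j N2 := by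
      have h1' : E * C * E = U (Q * (R * R) * Q) hXpd := by
        rw [hG'U, hG'E]
      have h2' : U (Q * (R * R) * Q) hXpd = Q * (R * C * R) * Q := by
        rw [e2, hPQ, hGU, hGR]
      have h3' : Q * (R * C * R) * Q = emb i j M2 * C * emb i j N2 := by
        rw [hQdef, hRdef, ← mulQR, ← mulRQ, ← emb_mul hij, ← emb_mul hij]
        simp only [Matrix.mul_assoc]
      rw [h1', h2', h3']
    have hsymC : C j i = C i j := (isSymm_of_posDef hCpos).apply i j
    -- entry equations
    have hii : (E * C * E) i i = (emb i j M2 * C * emb i j N2) i i := by rw [main]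
    have hij' : (E * C * E) i j = (emb i j M2 * C * emb i j N2) i j := by rw [main]
    rw [hEdef, emb_mul_col_i hij, mul_emb_row_i hij, mul_emb_row_i hij] at hii
    rw [emb_mul_col_i hij, mul_emb_row_i hij, mul_emb_row_i hij] at hii
    rw [hEdef, emb_mul_col_j hij, mul_emb_row_i hij, mul_emb_row_i hij] at hij'
    rw [emb_mul_col_j hij, mul_emb_row_i hij, mul_emb_row_i hij] at hij'
    norm_num [E2, M2, N2] at hii hij'
    rw [hsymC] at hii hij'
    constructor
    · linarith
    · have : C i j = 0 := by linarith
      rw [this] at hii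
      linarith
  -- extract the scalar
  have hscalar : ∃ c : ℝ, 0 < c ∧ C = c • (1 : Matrix (Fin n) (Fin n) ℝ) := by
    rcases Nat.eq_zero_or_pos n with hn | hn
    · refine ⟨1, one_pos, ?_⟩
      subst hn
      ext a b
      exact absurd a.2 (by simp)
    · set i0 : Fin n := ⟨0, hn⟩ with hi0
      refine ⟨C i0 i0, ?_, ?_⟩
      · have := hCpos.dotProduct_mulVec_pos (x := Pi.single i0 1) (by
          intro h
          have := congrFun h i0
          simp at this)
        simpa [dotProduct, Matrix.mulVec, Pi.single_apply] using this
      · ext a b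
        by_cases hab : a = b
        · rw [hab, Matrix.smul_apply, Matrix.one_apply_eq, smul_eq_mul, mul_one]
          by_cases hb : b = i0
          · rw [hb]
          · exact (pair b i0 hb).2
        · rw [Matrix.smul_apply, Matrix.one_apply_ne hab, smul_eq_mul, mul_zero]
          exact (pair a b hab).1
  obtain ⟨c, hc, hCs⟩ := hscalar
  refine ⟨c⁻¹ * c⁻¹, by positivity, ?_⟩
  intro X hX A hA
  obtain ⟨G, hGpd, hGG, hGU⟩ := inst1 X hX
  have hUcX : U X hX = c • X := by
    rw [hGU, hCs, Matrix.mul_smul, Matrix.smul_mul, Matrix.mul_one, hGG]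
  have hXdet : IsUnit X.det := hdetU X hX
  have hcXinv : (c • X)⁻¹ = c⁻¹ • X⁻¹ := by
    have hmul : (c • X) * (c⁻¹ • X⁻¹) = 1 := by
      rw [Matrix.smul_mul, Matrix.mul_smul, smul_smul, mul_inv_cancel₀ hc.ne',
        Matrix.mul_nonsing_inv _ hXdet, one_smul]
    exact Matrix.inv_eq_right_inv hmul
  rw [hUeq X hX A hA, hUcX, hcXinv]
  simp only [Matrix.smul_mul, Matrix.mul_smul, smul_smul, Matrix.mul_assoc]
end
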